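/- Let A be a real m×n matrix with singular value decomposition A = U Σ Vᵀ, where U ∈ ℝ^{m×m} and V ∈ ℝ^{n×n} are orthogonal and Σ ∈ ℝ^{m×n} has the singular values σ₁, σ₂, … of A on its diagonal and zeros elsewhere. For ε > 0 define the singular value soft thresholding S_ε(A) = U Σ_ε Vᵀ, where Σ_ε is obtained from Σ by replacing each diagonal entry σ_i with max(σ_i − ε, 0). Then for any η > 0 and ρ > 0, the matrix X* = S_{η/ρ}(A) minimizes the function X ↦ η ‖X‖_* + (ρ/2) ‖X − A‖_F² over all real m×n matrices X: for every X ∈ ℝ^{m×n}, η ‖X*‖_* + (ρ/2) ‖X* − A‖_F² ≤ η ‖X‖_* + (ρ/2) ‖X − A‖_F². -/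

import Mathlib

open Matrix

/-- Nuclear norm: trace of the psd square root of `Aᵀ * A`. -/
noncomputable def nuclearNorm {m n : Type*} [Fintype m] [Fintype n] [DecidableEq n]
    (A : Matrix m n ℝ) : ℝ :=
  ((((Matrix.posSemidef_conjTranspose_mul_self A).1.eigenvectorUnitary : Matrix n n ℝ) *
    diagonal ((RCLike.ofReal : ℝ → ℝ) ∘ (√·) ∘ (Matrix.posSemidef_conjTranspose_mul_self A).1.eigenvalues) *
    (star (Matrix.posSemidef_conjTranspose_mul_self A).1.eigenvectorUnitary : Matrix n n ℝ))).trace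

/-- Frobenius norm of a real matrix. -/
noncomputable def frobNorm {m n : Type*} [Fintype m] [Fintype n]
    (A : Matrix m n ℝ) : ℝ :=
  Real.sqrt (∑ i, ∑ j, (A i j) ^ 2)


/-!
Write `ε = η / ρ` and `f` for the objective. The matrix `G = ρ (A - X*)` equals
`U diag(ρ min(σᵢ, ε)) Vᵀ`, so its spectral norm is at most `η`, and `⟪G, X*⟫ = η ‖X*‖_*` because
`min(σ, ε) max(σ - ε, 0) = ε max(σ - ε, 0)`. Expanding `‖X - A‖_F²` around `X*` gives
`f X - f X* = η ‖X‖_* - ⟪G, X⟫ + (ρ/2) ‖X - X*‖_F²`, which is nonnegative by the duality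
`⟪G, X⟫ ≤ ‖G‖₂ ‖X‖_*`; the latter follows by evaluating the trace `⟪G, X⟫` in an orthonormal
eigenbasis `(vⱼ)` of `Xᵀ X`, where `‖X vⱼ‖` are the singular values of `X`.
-/

section NuclearNorm
open scoped MatrixOrder
variable {m n : Type*} [Fintype m] [Fintype n] [DecidableEq n]

theorem nuclearNorm_eq_sum_sqrt_eigenvalues (A : Matrix m n ℝ) :
    nuclearNorm A = ∑ j, √((posSemidef_conjTranspose_mul_self A).1.eigenvalues j) := by
  rw [nuclearNorm, trace_mul_cycle, Unitary.coe_star_mul_self, one_mul, trace_diagonal]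
  rfl

theorem nuclearNorm_nonneg (A : Matrix m n ℝ) : 0 ≤ nuclearNorm A := by
  rw [nuclearNorm_eq_sum_sqrt_eigenvalues]
  exact Finset.sum_nonneg fun j _ => Real.sqrt_nonneg _

theorem nuclearNorm_eq_trace_sqrt (A : Matrix m n ℝ) :
    nuclearNorm A = (CFC.sqrt (Aᵀ * A)).trace := by
  have hA := posSemidef_conjTranspose_mul_self A
  rw [← conjTranspose_eq_transpose_of_trivial, CFC.sqrt_eq_cfc, cfc_nnreal_eq_real _ _,
    hA.1.cfc_eq, IsHermitian.cfc, Unitary.conjStarAlgAut_apply, nuclearNorm]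
  unfold Real.sqrt
  rfl

theorem nuclearNorm_eq_trace_of_mul_self_eq {A : Matrix m n ℝ} {S : Matrix n n ℝ}
    (hS : S.PosSemidef) (h : S * S = Aᵀ * A) : nuclearNorm A = S.trace := by
  rw [nuclearNorm_eq_trace_sqrt, CFC.sqrt_unique h hS.nonneg]

end NuclearNorm

section Duality
open scoped Matrix.Norms.L2Operator
variable {m n : Type*} [Fintype m] [Fintype n]

theorem trace_transpose_mul_eq_sum_dotProduct [DecidableEq n] (G A : Matrix m n ℝ)
    (b : OrthonormalBasis n ℝ (EuclideanSpace ℝ n)) :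
    (Gᵀ * A).trace = ∑ j, (G *ᵥ b j) ⬝ᵥ (A *ᵥ b j) := by
  rw [← trace_toLin_eq (Gᵀ * A) (PiLp.basisFun 2 ℝ n), ← toLpLin_eq_toLin,
    LinearMap.trace_eq_sum_inner _ b]
  refine Finset.sum_congr rfl fun j _ => ?_
  simp [EuclideanSpace.inner_eq_star_dotProduct, ← mulVec_mulVec, dotProduct_mulVec,
    vecMul_transpose, dotProduct_comm]

theorem norm_mulVec_sq (A : Matrix m n ℝ) (x : EuclideanSpace ℝ n) :
    ‖(EuclideanSpace.equiv m ℝ).symm (A *ᵥ x)‖ ^ 2 = x ⬝ᵥ (Aᵀ * A) *ᵥ x := by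
  rw [← mulVec_mulVec, dotProduct_mulVec, vecMul_transpose, EuclideanSpace.norm_sq_eq]
  simp [dotProduct, sq]

theorem trace_transpose_mul_le [DecidableEq n] (G A : Matrix m n ℝ) :
    (Gᵀ * A).trace ≤ ‖G‖ * nuclearNorm A := by
  have hA := (posSemidef_conjTranspose_mul_self A).1
  set b := hA.eigenvectorBasis
  rw [trace_transpose_mul_eq_sum_dotProduct G A b, nuclearNorm_eq_sum_sqrt_eigenvalues,
    Finset.mul_sum]
  refine Finset.sum_le_sum fun j _ => ?_
  have hAb : ‖(EuclideanSpace.equiv m ℝ).symm (A *ᵥ b j)‖ = √(hA.eigenvalues j) := by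
    have hb : b j ⬝ᵥ b j = 1 := by
      have h := b.inner_eq_one j
      rw [EuclideanSpace.inner_eq_star_dotProduct] at h
      simpa using h
    rw [← Real.sqrt_sq (norm_nonneg _), norm_mulVec_sq, ← conjTranspose_eq_transpose_of_trivial,
      hA.mulVec_eigenvectorBasis, dotProduct_smul, hb, smul_eq_mul, mul_one]
  calc (G *ᵥ b j) ⬝ᵥ (A *ᵥ b j)
      = inner ℝ ((EuclideanSpace.equiv m ℝ).symm (A *ᵥ b j))
          ((EuclideanSpace.equiv m ℝ).symm (G *ᵥ b j)) := by
        simp [EuclideanSpace.inner_eq_star_dotProduct]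
    _ ≤ ‖(EuclideanSpace.equiv m ℝ).symm (G *ᵥ b j)‖ * √(hA.eigenvalues j) := by
        rw [← hAb, mul_comm]; exact real_inner_le_norm _ _
    _ ≤ ‖G‖ * √(hA.eigenvalues j) := by
        gcongr
        simpa using G.l2_opNorm_mulVec (b j)

end Duality

section Orthogonal
open scoped Matrix.Norms.L2Operator MatrixOrder
variable {m n : Type*} [Fintype m] [Fintype n] [DecidableEq m] {U : Matrix m m ℝ} {V : Matrix n n ℝ}

theorem transpose_mul_mul_transpose_mul_of_orthogonal (hU : Uᵀ * U = 1) (B C : Matrix m n ℝ) :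
    (U * B * Vᵀ)ᵀ * (U * C * Vᵀ) = V * (Bᵀ * C) * Vᵀ := by
  simp only [transpose_mul, transpose_transpose, Matrix.mul_assoc]
  rw [← Matrix.mul_assoc Uᵀ U, hU, Matrix.one_mul]

variable [DecidableEq n]

theorem trace_transpose_mul_of_orthogonal (hU : Uᵀ * U = 1) (hV : Vᵀ * V = 1)
    (B C : Matrix m n ℝ) : ((U * B * Vᵀ)ᵀ * (U * C * Vᵀ)).trace = (Bᵀ * C).trace := by
  rw [transpose_mul_mul_transpose_mul_of_orthogonal hU, trace_mul_cycle, hV, Matrix.one_mul]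

theorem nuclearNorm_mul_mul_transpose_of_orthogonal (hU : Uᵀ * U = 1) (hV : Vᵀ * V = 1)
    (A : Matrix m n ℝ) : nuclearNorm (U * A * Vᵀ) = nuclearNorm A := by
  set S := CFC.sqrt (Aᵀ * A)
  have hS : S.PosSemidef := (CFC.sqrt_nonneg _).posSemidef
  have hSS : S * S = Aᵀ * A :=
    CFC.sqrt_mul_sqrt_self _ (by simpa using (posSemidef_conjTranspose_mul_self A).nonneg)
  have hVSV : (V * S * Vᵀ).PosSemidef := by
    simpa using hS.mul_mul_conjTranspose_same V
  have hVSV_sq : V * S * Vᵀ * (V * S * Vᵀ) = (U * A * Vᵀ)ᵀ * (U * A * Vᵀ) := by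
    rw [transpose_mul_mul_transpose_mul_of_orthogonal hU, ← hSS]
    simp only [Matrix.mul_assoc]
    rw [← Matrix.mul_assoc Vᵀ V, hV, Matrix.one_mul]
  rw [nuclearNorm_eq_trace_sqrt A, nuclearNorm_eq_trace_of_mul_self_eq hVSV hVSV_sq,
    trace_mul_cycle, hV, Matrix.one_mul]

theorem l2_opNorm_le_one_of_orthogonal (hU : Uᵀ * U = 1) : ‖U‖ ≤ 1 := by
  have h1 : ‖(1 : Matrix m m ℝ)‖ ≤ 1 := by
    rw [← diagonal_one, l2_opNorm_diagonal]
    exact pi_norm_le_iff_of_nonneg zero_le_one |>.mpr fun _ => by simp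
  have h : ‖U‖ * ‖U‖ ≤ 1 := by
    rw [← l2_opNorm_conjTranspose_mul_self, conjTranspose_eq_transpose_of_trivial, hU]
    exact h1
  nlinarith [norm_nonneg U]

theorem l2_opNorm_mul_mul_transpose_le_of_orthogonal (hU : Uᵀ * U = 1) (hV : Vᵀ * V = 1)
    (B : Matrix m n ℝ) : ‖U * B * Vᵀ‖ ≤ ‖B‖ := by
  have hVt : ‖Vᵀ‖ ≤ 1 := by
    rw [← conjTranspose_eq_transpose_of_trivial, l2_opNorm_conjTranspose]
    exact l2_opNorm_le_one_of_orthogonal hV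
  calc ‖U * B * Vᵀ‖ ≤ ‖U‖ * ‖B‖ * ‖Vᵀ‖ :=
        (l2_opNorm_mul _ _).trans (by gcongr; exact l2_opNorm_mul _ _)
    _ ≤ 1 * ‖B‖ * 1 := by gcongr; exact l2_opNorm_le_one_of_orthogonal hU
    _ = ‖B‖ := by ring

end Orthogonal

section Prox
open scoped Matrix.Norms.L2Operator
variable {m n : Type*} [Fintype m] [Fintype n]

theorem trace_transpose_mul_eq_sum (B C : Matrix m n ℝ) :
    (Bᵀ * C).trace = ∑ i, ∑ j, B i j * C i j := by
  simp only [trace, diag, mul_apply, transpose_apply]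
  exact Finset.sum_comm

theorem frobNorm_sq (B : Matrix m n ℝ) : frobNorm B ^ 2 = (Bᵀ * B).trace := by
  rw [frobNorm, Real.sq_sqrt (by positivity), trace_transpose_mul_eq_sum]
  simp only [sq]

theorem frobNorm_add_sq (B C : Matrix m n ℝ) :
    frobNorm (B + C) ^ 2 = frobNorm B ^ 2 + 2 * (Cᵀ * B).trace + frobNorm C ^ 2 := by
  have h : (Bᵀ * C).trace = (Cᵀ * B).trace := by
    rw [← trace_transpose, transpose_mul, transpose_transpose]
  simp only [frobNorm_sq, transpose_add, Matrix.add_mul, Matrix.mul_add, trace_add, h]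
  ring

variable [DecidableEq n]

noncomputable def proxObjective (η ρ : ℝ) (A X : Matrix m n ℝ) : ℝ :=
  η * nuclearNorm X + ρ / 2 * frobNorm (X - A) ^ 2

theorem proxObjective_le_of_subgradient {η ρ : ℝ} (hρ : 0 ≤ ρ) {A E : Matrix m n ℝ}
    (hnorm : ‖ρ • (A - E)‖ ≤ η) (htrace : ((ρ • (A - E))ᵀ * E).trace = η * nuclearNorm E)
    (X : Matrix m n ℝ) : proxObjective η ρ A E ≤ proxObjective η ρ A X := by
  set G := ρ • (A - E)
  have hdual : (Gᵀ * X).trace ≤ η * nuclearNorm X :=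
    (trace_transpose_mul_le G X).trans (by gcongr; exact nuclearNorm_nonneg X)
  have hcross : ρ * ((E - A)ᵀ * (X - E)).trace = (Gᵀ * E).trace - (Gᵀ * X).trace := by
    simp only [G, transpose_smul, smul_mul, trace_smul, transpose_sub, Matrix.sub_mul,
      Matrix.mul_sub, trace_sub, smul_eq_mul]
    ring
  have hsplit : X - A = (X - E) + (E - A) := by abel
  unfold proxObjective
  have hsq : 0 ≤ ρ / 2 * frobNorm (X - E) ^ 2 := by positivity
  rw [hsplit, frobNorm_add_sq]
  linarith

end Prox

/-- The column sums `∑ i, D i j` serve as the diagonal entries of such a `D` (zero for `j ≥ m`). -/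
def IsRectDiagonal {R : Type*} [Zero R] {m n : ℕ} (D : Matrix (Fin m) (Fin n) R) : Prop :=
  ∀ (i : Fin m) (j : Fin n), (i : ℕ) ≠ j → D i j = 0

namespace IsRectDiagonal
variable {R S : Type*} {m n : ℕ}

theorem map [Zero R] [Zero S] {D : Matrix (Fin m) (Fin n) R} (hD : IsRectDiagonal D)
    {f : R → S} (hf : f 0 = 0) : IsRectDiagonal (D.map f) := fun i j hij => by
  simp [hD i j hij, hf]

theorem sum_apply_comp [AddCommMonoid R] [AddCommMonoid S] {D : Matrix (Fin m) (Fin n) R}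
    (hD : IsRectDiagonal D) {f : R → S} (hf : f 0 = 0) (j : Fin n) :
    ∑ i, f (D i j) = f (∑ i, D i j) := by
  by_cases hj : (j : ℕ) < m
  · have hzero : ∀ i, i ≠ ⟨j, hj⟩ → D i j = 0 := fun i hi =>
      hD i j fun h => hi (Fin.ext h)
    rw [Fintype.sum_eq_single _ fun i hi => by rw [hzero i hi, hf],
      Fintype.sum_eq_single _ hzero]
  · have hzero : ∀ i, D i j = 0 := fun i => hD i j (by omega)
    simp [hzero, hf]

theorem transpose_mul_self [NonUnitalNonAssocSemiring R] {D : Matrix (Fin m) (Fin n) R}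
    (hD : IsRectDiagonal D) : Dᵀ * D = diagonal fun j => ∑ i, D i j * D i j := by
  ext j k
  rcases eq_or_ne j k with rfl | hjk
  · simp [mul_apply]
  · rw [diagonal_apply_ne _ hjk, mul_apply]
    refine Finset.sum_eq_zero fun i _ => ?_
    rcases eq_or_ne (i : ℕ) j with hij | hij
    · rw [transpose_apply, hD i k fun hik => hjk (Fin.ext (hij.symm.trans hik)), mul_zero]
    · rw [transpose_apply, hD i j hij, zero_mul]

theorem of_ite_eq_map [Zero R] [Zero S] {D : Matrix (Fin m) (Fin n) R} (hD : IsRectDiagonal D)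
    {f : R → S} (hf : f 0 = 0) :
    (of fun (i : Fin m) (j : Fin n) => if (i : ℕ) = j then f (D i j) else 0) = D.map f := by
  ext i j
  by_cases h : (i : ℕ) = j
  · simp [h]
  · simp [h, hD i j h, hf]

variable {D : Matrix (Fin m) (Fin n) ℝ} (hD : IsRectDiagonal D)
include hD

theorem sum_sq_eq_sq_sum (j : Fin n) : ∑ i, D i j * D i j = (∑ i, D i j) ^ 2 := by
  rw [hD.sum_apply_comp (f := fun x => x * x) (mul_zero 0), sq]

theorem nuclearNorm_eq : nuclearNorm D = ∑ j, |∑ i, D i j| := by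
  have hS : (diagonal fun j => |∑ i, D i j|).PosSemidef :=
    posSemidef_diagonal_iff.mpr fun j => abs_nonneg _
  rw [nuclearNorm_eq_trace_of_mul_self_eq hS, trace_diagonal]
  rw [diagonal_mul_diagonal, hD.transpose_mul_self]
  simp only [hD.sum_sq_eq_sq_sum, abs_mul_abs_self, sq]

open scoped Matrix.Norms.L2Operator in
theorem l2_opNorm_le {c : ℝ} (hc0 : 0 ≤ c) (hc : ∀ j, |∑ i, D i j| ≤ c) : ‖D‖ ≤ c := by
  have hsq : ‖D‖ ^ 2 ≤ c ^ 2 := by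
    rw [sq, ← l2_opNorm_conjTranspose_mul_self, conjTranspose_eq_transpose_of_trivial,
      hD.transpose_mul_self, l2_opNorm_diagonal]
    refine pi_norm_le_iff_of_nonneg (sq_nonneg c) |>.mpr fun j => ?_
    rw [hD.sum_sq_eq_sq_sum, Real.norm_eq_abs, abs_pow]
    exact pow_le_pow_left₀ (abs_nonneg _) (hc j) 2
  exact abs_le_of_sq_le_sq' hsq hc0 |>.2

variable {ε : ℝ}

open scoped Matrix.Norms.L2Operator in
theorem l2_opNorm_map_mul_min_le (hcol : ∀ j, 0 ≤ ∑ i, D i j)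
    {ρ : ℝ} (hρ : 0 ≤ ρ) (hε : 0 ≤ ε) : ‖D.map fun x => ρ * min x ε‖ ≤ ρ * ε := by
  have hf : ρ * min 0 ε = 0 := by rw [min_eq_left hε, mul_zero]
  refine (hD.map hf).l2_opNorm_le (mul_nonneg hρ hε) fun j => ?_
  simp only [map_apply]
  rw [hD.sum_apply_comp (f := fun x => ρ * min x ε) hf,
    abs_of_nonneg (mul_nonneg hρ (le_min (hcol j) hε))]
  exact mul_le_mul_of_nonneg_left (min_le_right _ _) hρ

theorem trace_map_min_transpose_mul_map_max (hε : 0 ≤ ε) (ρ : ℝ) :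
    ((D.map fun x => ρ * min x ε)ᵀ * D.map fun x => max (x - ε) 0).trace =
      ρ * ε * nuclearNorm (D.map fun x => max (x - ε) 0) := by
  have hmax : max (0 - ε) 0 = 0 := by simpa using hε
  rw [trace_transpose_mul_eq_sum, Finset.sum_comm,
    (hD.map (f := fun x => max (x - ε) 0) hmax).nuclearNorm_eq, Finset.mul_sum]
  refine Finset.sum_congr rfl fun j _ => ?_
  simp only [map_apply]
  rw [hD.sum_apply_comp (f := fun x => ρ * min x ε * max (x - ε) 0) (by simp [hε]),
    hD.sum_apply_comp (f := fun x => max (x - ε) 0) hmax, abs_of_nonneg (le_max_right _ _)]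
  rcases le_total (∑ i, D i j) ε with h | h
  · simp [max_eq_right (sub_nonpos.mpr h)]
  · rw [min_eq_right h]

end IsRectDiagonal

theorem soft_thresholding_minimizes_general (m n : ℕ) (η ρ : ℝ) (hη : 0 < η) (hρ : 0 < ρ)
    (A : Matrix (Fin m) (Fin n) ℝ)
    (U : Matrix (Fin m) (Fin m) ℝ) (V : Matrix (Fin n) (Fin n) ℝ)
    (Sig : Matrix (Fin m) (Fin n) ℝ)
    (hU : Uᵀ * U = 1)
    (hV : Vᵀ * V = 1)
    (hSVD : A = U * Sig * Vᵀ)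
    (hoff : ∀ (i : Fin m) (j : Fin n), (i : ℕ) ≠ (j : ℕ) → Sig i j = 0)
    (hnonneg : ∀ (i : Fin m) (j : Fin n), (i : ℕ) = (j : ℕ) → 0 ≤ Sig i j)
    (Xstar : Matrix (Fin m) (Fin n) ℝ)
    (hXstar : Xstar = U * (Matrix.of fun (i : Fin m) (j : Fin n) =>
      if (i : ℕ) = (j : ℕ) then max (Sig i j - η / ρ) 0 else 0) * Vᵀ) :
    ∀ X : Matrix (Fin m) (Fin n) ℝ,
      η * nuclearNorm Xstar + ρ / 2 * frobNorm (Xstar - A) ^ 2 ≤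
      η * nuclearNorm X + ρ / 2 * frobNorm (X - A) ^ 2 := by
  set ε := η / ρ
  have hε : 0 < ε := div_pos hη hρ
  have hρε : ρ * ε = η := mul_div_cancel₀ η hρ.ne'
  have hSig : IsRectDiagonal Sig := hoff
  have hcol : ∀ j, 0 ≤ ∑ i, Sig i j := fun j => Finset.sum_nonneg fun i _ => by
    by_cases h : (i : ℕ) = j
    · exact hnonneg i j h
    · exact (hoff i j h).ge
  have hE := hSig.of_ite_eq_map (f := fun x => max (x - ε) 0) (by simpa using hε.le)
  have hG : ρ • (A - Xstar) = U * (Sig.map fun x => ρ * min x ε) * Vᵀ := by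
    rw [hSVD, hXstar, hE, ← Matrix.sub_mul, ← Matrix.mul_sub, ← Matrix.smul_mul, ← Matrix.mul_smul]
    congr 2
    ext i j
    rcases le_total (Sig i j) ε with h | h
    · simp [max_eq_right (sub_nonpos.mpr h), min_eq_left h]
    · simp [max_eq_left (sub_nonneg.mpr h), min_eq_right h]
  intro X
  refine proxObjective_le_of_subgradient hρ.le ?_ ?_ X
  · rw [hG, ← hρε]
    exact (l2_opNorm_mul_mul_transpose_le_of_orthogonal hU hV _).trans
      (hSig.l2_opNorm_map_mul_min_le hcol hρ.le hε.le)
  · rw [hG, hXstar, hE, trace_transpose_mul_of_orthogonal hU hV,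
      nuclearNorm_mul_mul_transpose_of_orthogonal hU hV, ← hρε]
    exact hSig.trace_map_min_transpose_mul_map_max hε.le ρ

/-- **Singular value soft thresholding solves the nuclear-norm proximal problem**:
if `A = U Σ Vᵀ` is an SVD and `X* = U Σ_{η/ρ} Vᵀ` where `Σ_{η/ρ}` soft-thresholds
the diagonal of `Σ` at level `η/ρ`, then `X*` minimizes
`X ↦ η‖X‖_* + (ρ/2)‖X − A‖_F²`. -/
theorem soft_thresholding_minimizes (m n : ℕ) (η ρ : ℝ) (hη : 0 < η) (hρ : 0 < ρ)
    (A : Matrix (Fin m) (Fin n) ℝ)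
    (U : Matrix (Fin m) (Fin m) ℝ) (V : Matrix (Fin n) (Fin n) ℝ)
    (Sig : Matrix (Fin m) (Fin n) ℝ)
    (hU : Uᵀ * U = 1) (hU' : U * Uᵀ = 1)
    (hV : Vᵀ * V = 1) (hV' : V * Vᵀ = 1)
    (hSVD : A = U * Sig * Vᵀ)
    (hoff : ∀ (i : Fin m) (j : Fin n), (i : ℕ) ≠ (j : ℕ) → Sig i j = 0)
    (hnonneg : ∀ (i : Fin m) (j : Fin n), (i : ℕ) = (j : ℕ) → 0 ≤ Sig i j)
    (Xstar : Matrix (Fin m) (Fin n) ℝ)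
    (hXstar : Xstar = U * (Matrix.of fun (i : Fin m) (j : Fin n) =>
      if (i : ℕ) = (j : ℕ) then max (Sig i j - η / ρ) 0 else 0) * Vᵀ) :
    ∀ X : Matrix (Fin m) (Fin n) ℝ,
      η * nuclearNorm Xstar + ρ / 2 * frobNorm (Xstar - A) ^ 2 ≤
      η * nuclearNorm X + ρ / 2 * frobNorm (X - A) ^ 2 :=
  soft_thresholding_minimizes_general m n η ρ hη hρ A U V Sig hU hV hSVD hoff hnonneg Xstar hXstar
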